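/- arXiv:2101.01013 — 7 statements merged into one kernel-verified Lean document; each statement's English description precedes it below -/
import Mathlib

section
/- Let X ⊂ ℓ¹(ℕ) be the union of the coordinate half-axes X_n = {t·e_n : t ∈ [0,∞)}, n ∈ ℕ, with the ℓ¹-metric. Define d on X ⊔ X' by d(x,y') = |s−t|+1 if x = t·e_n, y = s·e_{n+1}, and d(x,y') = s+t+1 otherwise (x = t·e_n ∈ X_n, y = s·e_m ∈ X_m with m ≠ n+1). Then d, extended by the ℓ¹-metric on each copy, is a metric on X ⊔ X'. -/
noncomputable section
open scoped Classical

instance : Fact ((1 : ENNReal) ≤ 1) := ⟨le_rfl⟩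

/-- The space `ℓ¹(ℕ)`. -/
abbrev L1 : Type := lp (fun _ : ℕ => ℝ) 1

/-- `X ⊂ ℓ¹(ℕ)`: the union of the coordinate half-axes `X_n = {t • e_n : t ≥ 0}`. -/
def Xset : Set L1 := {x | ∃ (n : ℕ) (t : ℝ), 0 ≤ t ∧ x = lp.single 1 n t}

/-- The mixed distance: `|s - t| + 1` if `x = t • e_n`, `y = s • e_{n+1}`, and
`s + t + 1` otherwise (note `‖t • e_n‖ = t` for `t ≥ 0`). -/
def Dmix (x y : Xset) : ℝ :=
  if ∃ (n : ℕ) (t s : ℝ), 0 ≤ t ∧ 0 ≤ s ∧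
      (x : L1) = lp.single 1 n t ∧ (y : L1) = lp.single 1 (n + 1) s
  then |‖(y : L1)‖ - ‖(x : L1)‖| + 1
  else ‖(x : L1)‖ + ‖(y : L1)‖ + 1

/-- The distance on the double `X ⊔ X'`: the `ℓ¹`-distance within each copy,
and `Dmix` between the copies. -/
def Dd : Xset ⊕ Xset → Xset ⊕ Xset → ℝ
  | Sum.inl x, Sum.inl y => dist x y
  | Sum.inr x, Sum.inr y => dist x y
  | Sum.inl x, Sum.inr y => Dmix x y
  | Sum.inr x, Sum.inl y => Dmix y x

/-- A function `d : α → α → ℝ` is a metric. -/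
def IsMetric {α : Type*} (d : α → α → ℝ) : Prop :=
  (∀ p q, d p q = 0 ↔ p = q) ∧ (∀ p q, d p q = d q p) ∧ ∀ p q r, d p r ≤ d p q + d q r

/-!
Let `σ` be the right shift `t • e_n ↦ t • e_{n+1}`; it maps `X` isometrically into itself, and
the mixed distance is `d(x, y') = ‖σ x - y‖ + 1` (when `t = 0` or `s = 0` the two cases of its
definition agree). Gluing two copies of any metric space by `d(x, y') = dist (σ x) y + c` along an
isometry `σ` with `c > 0` gives a metric: after applying `σ` to the points of the first copy,
every mixed triangle inequality becomes a triangle inequality in a single copy.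
-/

section DoubleAlongIsometry

variable {α : Type*} [MetricSpace α]

def doubleDist (f : α → α) (c : ℝ) : α ⊕ α → α ⊕ α → ℝ
  | Sum.inl x, Sum.inl y => dist x y
  | Sum.inr x, Sum.inr y => dist x y
  | Sum.inl x, Sum.inr y => dist (f x) y + c
  | Sum.inr x, Sum.inl y => dist (f y) x + c

theorem isMetric_doubleDist {f : α → α} (hf : Isometry f) {c : ℝ} (hc : 0 < c) :
    IsMetric (doubleDist f c) := by
  refine ⟨?_, ?_, ?_⟩
  · rintro (x | x) (y | y) <;> simp only [doubleDist, dist_eq_zero, Sum.inl.injEq,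
      Sum.inr.injEq, reduceCtorEq, iff_false]
    all_goals exact (add_pos_of_nonneg_of_pos dist_nonneg hc).ne'
  · rintro (x | x) (y | y) <;> simp only [doubleDist, dist_comm]
  · rintro (x | x) (y | y) (z | z) <;> simp only [doubleDist]
    · exact dist_triangle x y z
    · linarith [dist_triangle (f x) (f y) z, hf.dist_eq x y]
    · linarith [dist_triangle_right (f x) (f z) y, hf.dist_eq x z]
    · linarith [dist_triangle (f x) y z]
    · linarith [dist_triangle (f z) (f y) x, hf.dist_eq z y, dist_comm y z]
    · linarith [dist_triangle_left x z (f y)]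
    · linarith [dist_triangle_right (f z) x y, dist_comm x y]
    · exact dist_triangle x y z

end DoubleAlongIsometry

namespace lp

variable {ι E : Type*} [DecidableEq ι] [NormedAddCommGroup E]

theorem norm_single_sub_single_one (i j : ι) (a b : E) :
    ‖(lp.single 1 i a : lp (fun _ : ι => E) 1) - lp.single 1 j b‖ =
      if i = j then ‖a - b‖ else ‖a‖ + ‖b‖ := by
  split_ifs with h
  · subst h
    rw [← lp.single_sub, lp.norm_single zero_lt_one]
  · have key := lp.norm_sum_single (E := fun _ : ι => E) (p := 1) (by norm_num)
      (fun k => if k = i then a else -b) {i, j}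
    simpa only [Finset.sum_pair h, if_pos, if_neg (Ne.symm h), lp.single_neg, ← sub_eq_add_neg,
      ENNReal.toReal_one, Real.rpow_one, _root_.norm_neg] using key

theorem eq_of_single_eq_single {p : ENNReal} {i j : ι} {a b : E} (ha : a ≠ 0)
    (h : (lp.single p i a : lp (fun _ : ι => E) p) = lp.single p j b) : i = j := by
  by_contra hij
  have hi := congrArg (fun x : lp (fun _ : ι => E) p => x i) h
  simp only [lp.single_apply_self, lp.single_apply_ne _ _ _ hij] at hi
  exact ha hi

end lp

lemma L1.norm_single (n : ℕ) (t : ℝ) : ‖(lp.single 1 n t : L1)‖ = |t| := by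
  rw [lp.norm_single zero_lt_one, Real.norm_eq_abs]

lemma L1.norm_single_sub_single (n m : ℕ) (t s : ℝ) :
    ‖(lp.single 1 n t : L1) - lp.single 1 m s‖ = if n = m then |t - s| else |t| + |s| := by
  simp only [lp.norm_single_sub_single_one, Real.norm_eq_abs]

-- The axis of `0` is arbitrary; this is harmless because every shift of `0` is `0`.
def axisIndex (x : Xset) : ℕ := x.2.choose

lemma exists_eq_single_axisIndex (x : Xset) :
    ∃ t, 0 ≤ t ∧ (x : L1) = lp.single 1 (axisIndex x) t :=
  x.2.choose_spec

def axisShift (x : Xset) : Xset :=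
  ⟨lp.single 1 (axisIndex x + 1) ‖(x : L1)‖, _, _, norm_nonneg _, rfl⟩

lemma axisShift_of_eq_single {x : Xset} {n : ℕ} {t : ℝ} (ht : 0 ≤ t)
    (hx : (x : L1) = lp.single 1 n t) : (axisShift x : L1) = lp.single 1 (n + 1) t := by
  obtain ⟨t', -, hx'⟩ := exists_eq_single_axisIndex x
  simp only [axisShift, hx, L1.norm_single, abs_of_nonneg ht]
  rcases eq_or_ne t 0 with rfl | ht0
  · simp only [lp.single_zero]
  · rw [← lp.eq_of_single_eq_single ht0 (hx.symm.trans hx')]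

lemma isometry_axisShift : Isometry axisShift := by
  refine Isometry.of_dist_eq fun x y => ?_
  obtain ⟨n, t, ht, hx⟩ := x.2
  obtain ⟨m, s, hs, hy⟩ := y.2
  simp only [Subtype.dist_eq, dist_eq_norm, axisShift_of_eq_single ht hx,
    axisShift_of_eq_single hs hy, hx, hy, L1.norm_single_sub_single, add_left_inj]

lemma Dmix_eq_dist_axisShift_add_one (x y : Xset) : Dmix x y = dist (axisShift x) y + 1 := by
  rw [Dmix, Subtype.dist_eq, dist_eq_norm]
  split_ifs with h
  · obtain ⟨n, t, s, ht, hs, hx, hy⟩ := h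
    rw [axisShift_of_eq_single ht hx, hx, hy, L1.norm_single_sub_single, if_pos rfl,
      L1.norm_single, L1.norm_single, abs_of_nonneg ht, abs_of_nonneg hs, abs_sub_comm]
  · obtain ⟨n, t, ht, hx⟩ := x.2
    obtain ⟨m, s, hs, hy⟩ := y.2
    have hm : n + 1 ≠ m := by
      rintro rfl
      exact h ⟨n, t, s, ht, hs, hx, hy⟩
    rw [axisShift_of_eq_single ht hx, hx, hy, L1.norm_single_sub_single, if_neg hm,
      L1.norm_single, L1.norm_single]

/-- `d`, extended by the `ℓ¹`-metric on each copy, is a metric on the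
double `X ⊔ X'`. -/
theorem stmt3 : IsMetric Dd := by
  have hDd : Dd = doubleDist axisShift 1 := by
    funext p q
    rcases p with x | x <;> rcases q with y | y <;>
      simp only [Dd, doubleDist, Dmix_eq_dist_axisShift_add_one]
  rw [hDd]
  exact isMetric_doubleDist isometry_axisShift one_pos
end
end

section
/- With x_n and x'_n as above, for every even n = 2k one has inf_m d(x_n, x'_m) ≤ log 2, while for every odd n = 2k−1 one has inf_m d(x_n, x'_m) = log(k+1); in particular the distance from x_{2k−1} to the set {x'_m : m ∈ ℕ} tends to infinity as k → ∞. -/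
/-! Both `x_{2k}` and `x'_k` have support `{1, …, 2k}`, and there the entries `log (j+1)` and
`log (⌊(j+1)/2⌋ + 1)` differ by at most `log 2`, since `⌊(j+1)/2⌋ + 1 ≤ j + 1 ≤ 2 (⌊(j+1)/2⌋ + 1)`.
For odd `n = 2k - 1`, comparing with `x'_k` costs only the extra entry `log (k+1)` at position
`2k`. Conversely, `x'_m` with `m < k` vanishes at position `2k - 1`, where `x_{2k-1}` equals
`log (2k) ≥ log (k+1)`, while `x'_m` with `m ≥ k` equals `log (k+1)` at position `2k`, where
`x_{2k-1}` vanishes. -/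

noncomputable section
noncomputable section

/-- `x_n = (log 2, log 3, …, log (n+1), 0, 0, …)`: entry `log (k+1)` in positions
`k = 1, …, n` and `0` elsewhere. -/
def xseq (n : ℕ) : ℕ → ℝ := fun k => if 1 ≤ k ∧ k ≤ n then Real.log (k + 1) else 0

/-- `x'_n = (log 2, log 2, log 3, log 3, …, log (n+1), log (n+1), 0, …)`: each entry
`log k`, `2 ≤ k ≤ n+1`, repeated twice, occupying positions `1, …, 2n`. -/
def xseq' (n : ℕ) : ℕ → ℝ :=
  fun k => if 1 ≤ k ∧ k ≤ 2 * n then Real.log (((k + 1) / 2 + 1 : ℕ) : ℝ) else 0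

/-- The sup-metric of `ℓ^∞(ℕ)`. -/
def dsup (x y : ℕ → ℝ) : ℝ := ⨆ k : ℕ, |x k - y k|

open Real

lemma dsup_nonneg (x y : ℕ → ℝ) : 0 ≤ dsup x y :=
  Real.iSup_nonneg fun _ => abs_nonneg _

lemma dsup_le {x y : ℕ → ℝ} {C : ℝ} (h : ∀ k, |x k - y k| ≤ C) : dsup x y ≤ C :=
  ciSup_le h

lemma abs_sub_le_dsup {x y : ℕ → ℝ} (h : BddAbove (Set.range fun k => |x k - y k|)) (k : ℕ) :
    |x k - y k| ≤ dsup x y :=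
  le_ciSup h k

lemma ciInf_dsup_le (x : ℕ → ℝ) (y : ℕ → ℕ → ℝ) (m : ℕ) :
    ⨅ i, dsup x (y i) ≤ dsup x (y m) :=
  ciInf_le ⟨0, by rintro _ ⟨i, rfl⟩; exact dsup_nonneg _ _⟩ m

lemma Real.abs_log_sub_log_le_log_two {a b : ℝ} (ha : 0 < a) (hab : a ≤ b) (hba : b ≤ 2 * a) :
    |log b - log a| ≤ log 2 := by
  have hlow : log a ≤ log b := log_le_log ha hab
  have hup : log b ≤ log 2 + log a := by
    rw [← log_mul two_ne_zero ha.ne']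
    exact log_le_log (ha.trans_le hab) hba
  rw [abs_of_nonneg (sub_nonneg.2 hlow)]
  linarith

lemma abs_log_succ_sub_log_half_succ_le (j : ℕ) :
    |log (j + 1) - log (((j + 1) / 2 + 1 : ℕ) : ℝ)| ≤ log 2 := by
  have hpos : (0 : ℝ) < ((j + 1) / 2 + 1 : ℕ) := by positivity
  have hle : (((j + 1) / 2 + 1 : ℕ) : ℝ) ≤ j + 1 := by exact_mod_cast (by omega : _ ≤ j + 1)
  have hge : (j : ℝ) + 1 ≤ 2 * (((j + 1) / 2 + 1 : ℕ) : ℝ) := by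
    exact_mod_cast (by omega : j + 1 ≤ 2 * ((j + 1) / 2 + 1))
  exact abs_log_sub_log_le_log_two hpos hle hge

lemma log_natCast_succ_nonneg (n : ℕ) : 0 ≤ log (n + 1) :=
  log_nonneg (by linarith [n.cast_nonneg (α := ℝ)])

lemma xseq_nonneg (n j : ℕ) : 0 ≤ xseq n j := by
  unfold xseq
  split_ifs
  exacts [log_natCast_succ_nonneg j, le_rfl]

lemma xseq_le_log (n j : ℕ) : xseq n j ≤ log (n + 1) := by
  unfold xseq
  split_ifs with h
  · exact log_le_log (by positivity) (by exact_mod_cast Nat.succ_le_succ h.2)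
  · exact log_natCast_succ_nonneg n

lemma xseq'_nonneg (m j : ℕ) : 0 ≤ xseq' m j := by
  unfold xseq'
  split_ifs
  exacts [log_natCast_nonneg _, le_rfl]

lemma xseq'_le_log (m j : ℕ) : xseq' m j ≤ log (m + 1) := by
  unfold xseq'
  split_ifs with h
  · exact log_le_log (by positivity) (by exact_mod_cast (by omega : (j + 1) / 2 + 1 ≤ m + 1))
  · exact log_natCast_succ_nonneg m

lemma bddAbove_abs_xseq_sub_xseq' (n m : ℕ) :
    BddAbove (Set.range fun j => |xseq n j - xseq' m j|) := by
  refine ⟨log (n + 1) + log (m + 1), ?_⟩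
  rintro _ ⟨j, rfl⟩
  have := xseq_nonneg n j
  have := xseq_le_log n j
  have := xseq'_nonneg m j
  have := xseq'_le_log m j
  rw [abs_sub_le_iff]
  constructor <;> linarith

lemma abs_xseq_two_mul_sub_xseq'_le (k j : ℕ) : |xseq (2 * k) j - xseq' k j| ≤ log 2 := by
  unfold xseq xseq'
  split_ifs
  · exact abs_log_succ_sub_log_half_succ_le j
  · simpa using log_nonneg one_le_two

lemma abs_xseq_two_mul_sub_one_sub_xseq'_le {k : ℕ} (hk : 1 ≤ k) (j : ℕ) :
    |xseq (2 * k - 1) j - xseq' k j| ≤ log (k + 1) := by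
  have hlog2 : log 2 ≤ log (k + 1) :=
    log_le_log two_pos (by linarith [(Nat.one_le_cast (α := ℝ)).2 hk])
  unfold xseq xseq'
  split_ifs with h₁ h₂ h₂
  · exact (abs_log_succ_sub_log_half_succ_le j).trans hlog2
  · omega
  · rw [show (j + 1) / 2 + 1 = k + 1 by omega, zero_sub, abs_neg, Nat.cast_succ,
      abs_of_nonneg (log_natCast_succ_nonneg k)]
  · simpa using log_natCast_succ_nonneg k

lemma log_succ_le_dsup_xseq_two_mul_sub_one {k : ℕ} (hk : 1 ≤ k) (m : ℕ) :
    log (k + 1) ≤ dsup (xseq (2 * k - 1)) (xseq' m) := by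
  have hbdd := bddAbove_abs_xseq_sub_xseq' (2 * k - 1) m
  rcases lt_or_ge m k with hm | hm
  · refine le_trans ?_ (abs_sub_le_dsup hbdd (2 * k - 1))
    have hx : xseq (2 * k - 1) (2 * k - 1) = log (2 * k) := by
      rw [xseq, if_pos ⟨by omega, le_rfl⟩, Nat.cast_pred (by omega)]
      push_cast
      ring_nf
    have hx' : xseq' m (2 * k - 1) = 0 := if_neg (by omega)
    rw [hx, hx', sub_zero, abs_of_nonneg (log_nonneg (by exact_mod_cast (by omega : 1 ≤ 2 * k)))]
    exact log_le_log (by positivity) (by linarith [(Nat.one_le_cast (α := ℝ)).2 hk])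
  · refine le_trans (le_of_eq ?_) (abs_sub_le_dsup hbdd (2 * k))
    have hx : xseq (2 * k - 1) (2 * k) = 0 := if_neg (by omega)
    have hx' : xseq' m (2 * k) = log (k + 1) := by
      rw [xseq', if_pos ⟨by omega, by omega⟩, show (2 * k + 1) / 2 + 1 = k + 1 by omega]
      push_cast
      rfl
    rw [hx, hx', zero_sub, abs_neg, abs_of_nonneg (log_natCast_succ_nonneg k)]

lemma iInf_dsup_xseq_two_mul_sub_one {k : ℕ} (hk : 1 ≤ k) :
    ⨅ m, dsup (xseq (2 * k - 1)) (xseq' m) = log (k + 1) :=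
  le_antisymm
    ((ciInf_dsup_le _ _ k).trans (dsup_le (abs_xseq_two_mul_sub_one_sub_xseq'_le hk)))
    (le_ciInf (log_succ_le_dsup_xseq_two_mul_sub_one hk))

/-- for even `n = 2k` the distance from `x_n` to `{x'_m}` is at most
`log 2`, while for odd `n = 2k - 1` it equals `log (k+1)`; in particular the distance
from `x_{2k-1}` to `{x'_m : m ∈ ℕ}` tends to infinity as `k → ∞`. -/
theorem stmt5 :
    (∀ k : ℕ, 1 ≤ k → (⨅ m : ℕ, dsup (xseq (2 * k)) (xseq' m)) ≤ Real.log 2) ∧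
    (∀ k : ℕ, 1 ≤ k →
      (⨅ m : ℕ, dsup (xseq (2 * k - 1)) (xseq' m)) = Real.log (k + 1)) ∧
    Filter.Tendsto (fun k : ℕ => ⨅ m : ℕ, dsup (xseq (2 * k - 1)) (xseq' m))
      Filter.atTop Filter.atTop := by
  refine ⟨fun k _ => (ciInf_dsup_le _ _ k).trans (dsup_le (abs_xseq_two_mul_sub_xseq'_le k)),
    fun k hk => iInf_dsup_xseq_two_mul_sub_one hk, ?_⟩
  have hlog : Filter.Tendsto (fun k : ℕ => log (k + 1)) Filter.atTop Filter.atTop :=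
    tendsto_log_atTop.comp (Filter.tendsto_atTop_add_const_right _ 1 tendsto_natCast_atTop_atTop)
  refine hlog.congr' ?_
  filter_upwards [Filter.eventually_ge_atTop 1] with k hk
  exact (iInf_dsup_xseq_two_mul_sub_one hk).symm

end
end
end

section
/- Let F₂ be the free group on generators a, b with word-length metric d. Let Y be the set of reduced words beginning with a or a⁻¹, and Z = F₂ \ Y. Then for all y ∈ Y and z ∈ Z, d(ab·y, a²·z) = d(y,z) + 2. -/
/-- The generator `a` of the free group `F₂`. -/
def a : FreeGroup (Fin 2) := FreeGroup.of 0

/-- The generator `b` of the free group `F₂`. -/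
def b : FreeGroup (Fin 2) := FreeGroup.of 1

/-- `Y`: the set of (nonempty) reduced words whose first letter is `a` or `a⁻¹`. -/
def Yset : Set (FreeGroup (Fin 2)) := {w | ∃ t : Bool, w.toWord.head? = some (0, t)}

/-!
Rewrite `(ab·y)⁻¹ (a²·z)` as `y⁻¹ · b⁻¹ · a · z`. The reduced word of `y⁻¹` ends in `a^{±1}` and
that of `z` does not start with `a^{±1}`, so no cancellation happens at any of the junctions: the
reduced word of `y⁻¹ b⁻¹ a z` is the concatenation of those of `y⁻¹`, `b⁻¹`, `a`, `z`, and that of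
`y⁻¹ z` is the concatenation of those of `y⁻¹` and `z`. The lengths differ by exactly two.
-/

namespace FreeGroup

variable {α : Type*} [DecidableEq α]

theorem toWord_mul_eq_append {x y : FreeGroup α}
    (h : ∀ p ∈ x.toWord.getLast?, ∀ q ∈ y.toWord.head?, p.1 ≠ q.1) :
    (x * y).toWord = x.toWord ++ y.toWord := by
  have hred : IsReduced (x.toWord ++ y.toWord) :=
    List.isChain_append.2 ⟨isReduced_toWord, isReduced_toWord,
      fun p hp q hq hpq => absurd hpq (h p hp q hq)⟩
  rw [toWord_mul, hred.reduce_eq]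

theorem norm_mul_eq_add {x y : FreeGroup α}
    (h : ∀ p ∈ x.toWord.getLast?, ∀ q ∈ y.toWord.head?, p.1 ≠ q.1) :
    (x * y).norm = x.norm + y.norm := by
  simp only [norm, toWord_mul_eq_append h, List.length_append]

theorem getLast?_toWord_inv (x : FreeGroup α) :
    x⁻¹.toWord.getLast? = x.toWord.head?.map fun p => (p.1, !p.2) := by
  rw [toWord_inv, invRev, List.getLast?_reverse, List.head?_map]

theorem toWord_of_mul {i : α} {y : FreeGroup α} (h : ∀ q ∈ y.toWord.head?, i ≠ q.1) :
    (of i * y).toWord = (i, true) :: y.toWord :=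
  toWord_mul_eq_append (by simpa [toWord_of] using h)

theorem toWord_of_inv_mul {i : α} {y : FreeGroup α} (h : ∀ q ∈ y.toWord.head?, i ≠ q.1) :
    ((of i)⁻¹ * y).toWord = (i, false) :: y.toWord := by
  have hinv : (of i)⁻¹.toWord = [(i, false)] := by simp [toWord_inv, toWord_of, invRev]
  rw [toWord_mul_eq_append (by simpa [hinv] using h), hinv, List.singleton_append]

end FreeGroup

open FreeGroup

/-- for `y ∈ Y` and `z ∈ Z = F₂ \ Y`,
`d(ab·y, a²·z) = d(y, z) + 2`, where `d(g, h) = |g⁻¹h|` is the word metric. -/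
theorem stmt8 : ∀ y ∈ Yset, ∀ z ∉ Yset,
    ((a * b * y)⁻¹ * (a * a * z)).norm = (y⁻¹ * z).norm + 2 := by
  rintro y ⟨t, hy⟩ z hz
  have hz_head : ∀ q ∈ z.toWord.head?, (0 : Fin 2) ≠ q.1 := fun q hq h0 =>
    hz ⟨q.2, by rw [hq, h0]⟩
  have hy_last : ∀ p ∈ y⁻¹.toWord.getLast?, p.1 = 0 := by
    intro p hp
    rw [getLast?_toWord_inv, hy, Option.map_some, Option.mem_some_iff] at hp
    rw [← hp]
  have hbaz : (b⁻¹ * (a * z)).toWord = (1, false) :: (0, true) :: z.toWord := by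
    rw [b, a, toWord_of_inv_mul (by simp [toWord_of_mul hz_head]), toWord_of_mul hz_head]
  calc ((a * b * y)⁻¹ * (a * a * z)).norm = (y⁻¹ * (b⁻¹ * (a * z))).norm := by group
    _ = y⁻¹.norm + (z.norm + 2) := by
      rw [norm_mul_eq_add fun p hp q hq => ?_]
      · simp only [FreeGroup.norm, hbaz, List.length_cons]
      rw [hbaz, List.head?_cons, Option.mem_some_iff] at hq
      rw [hy_last p hp, ← hq]
      decide
    _ = (y⁻¹ * z).norm + 2 := by
      rw [norm_mul_eq_add fun p hp q hq => hy_last p hp ▸ hz_head q hq]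
      ring
end

section
/- Let X = ℝⁿ with a metric d_X induced by a norm, and let d be a metric on the double X ⊔ X' extending d_X on both copies with inf d(x,y') > 0. If there exists C > 0 with d(x, X') := inf_{y} d(x, y') < C for all x ∈ X, then there exists D > 0 with d(x', X) := inf_y d(x', y) < D for all x ∈ X. -/
def IsNorm {n : ℕ} (ν : (Fin n → ℝ) → ℝ) : Prop :=
  (∀ x, ν x = 0 ↔ x = 0) ∧ (∀ (c : ℝ) (x), ν (c • x) = |c| * ν x) ∧
    ∀ x y, ν (x + y) ≤ ν x + ν y

open Filter Topology Metric Function Set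

def RoughIsometryWith {α β : Type*} [PseudoMetricSpace α] [PseudoMetricSpace β] (K : ℝ)
    (f : α → β) : Prop :=
  ∀ a b, |dist (f a) (f b) - dist a b| ≤ K

section Limits

variable {ι α β : Type*} [PseudoMetricSpace α] [MetricSpace β]

theorem isometry_of_tendsto_of_roughIsometryWith {l : Filter ι} [l.NeBot] {F : ι → α → β}
    {δ : ι → ℝ} {G : α → β} (hF : ∀ i, RoughIsometryWith (δ i) (F i))
    (hδ : Tendsto δ l (𝓝 0)) (hG : ∀ x, Tendsto (F · x) l (𝓝 (G x))) : Isometry G := by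
  refine Isometry.of_dist_eq fun x y => tendsto_nhds_unique ((hG x).dist (hG y)) ?_
  rw [tendsto_iff_dist_tendsto_zero]
  exact squeeze_zero (fun _ => dist_nonneg) (fun i => (Real.dist_eq _ _).trans_le (hF i x y)) hδ

theorem exists_isometry_tendsto_of_roughIsometryWith [ProperSpace β] {l : Filter ι} [l.NeBot]
    {F : ι → α → β} {δ : ι → ℝ} (hF : ∀ i, RoughIsometryWith (δ i) (F i))
    (hδ : Tendsto δ l (𝓝 0)) (x₀ : α) (b : β) {R : ℝ} (hb : ∀ i, dist (F i x₀) b ≤ R) :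
    ∃ (U : Ultrafilter ι) (G : α → β), Isometry G ∧ ∀ x, Tendsto (F · x) U (𝓝 (G x)) := by
  set U := Ultrafilter.of l
  have hU : Tendsto δ U (𝓝 0) := hδ.mono_left (Ultrafilter.of_le l)
  have hlim : ∀ x, ∃ a, Tendsto (F · x) U (𝓝 a) := by
    intro x
    have hbdd : ∀ᶠ i in U, F i x ∈ closedBall b (dist x x₀ + 1 + R) := by
      filter_upwards [hU.eventually (eventually_le_nhds one_pos)] with i hi
      have := (abs_le.1 (hF i x x₀)).2
      rw [mem_closedBall]
      linarith [dist_triangle (F i x) (F i x₀) b, hb i]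
    obtain ⟨a, -, ha⟩ := (isCompact_closedBall b _).ultrafilter_le_nhds' (U.map (F · x)) hbdd
    exact ⟨a, ha⟩
  choose G hG using hlim
  exact ⟨U, G, isometry_of_tendsto_of_roughIsometryWith hF hU hG, hG⟩

end Limits

theorem Isometry.iterate {α : Type*} [PseudoEMetricSpace α] {g : α → α} (hg : Isometry g) :
    ∀ k, Isometry g^[k]
  | 0 => isometry_id
  | k + 1 => (hg.iterate k).comp hg

theorem Isometry.surjective_of_isFixedPt {α : Type*} [MetricSpace α] [ProperSpace α]
    {g : α → α} (hg : Isometry g) {x₀ : α} (h₀ : IsFixedPt g x₀) : Surjective g := by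
  intro z
  have horbit : ∀ k, g^[k] z ∈ closedBall x₀ (dist z x₀) := fun k => by
    simpa only [mem_closedBall, (h₀.iterate k).eq] using ((hg.iterate k).dist_eq z x₀).le
  obtain ⟨a, -, φ, hφ, hlim⟩ := (isCompact_closedBall x₀ _).tendsto_subseq horbit
  suffices z ∈ closure (range g) by
    rwa [hg.isClosedEmbedding.isClosed_range.closure_eq] at this
  refine Metric.mem_closure_iff.2 fun ε hε => ?_
  obtain ⟨N, hN⟩ := Metric.cauchySeq_iff'.1 hlim.cauchySeq ε hε
  obtain ⟨m, hm⟩ := Nat.exists_eq_add_of_lt (hφ (Nat.lt_succ_self N))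
  refine ⟨g^[m + 1] z, by rw [iterate_succ_apply']; exact mem_range_self _, ?_⟩
  have := hN (N + 1) N.le_succ
  rwa [comp_apply, comp_apply, hm, add_assoc, iterate_add_apply, dist_comm,
    (hg.iterate _).dist_eq] at this

theorem Isometry.surjective_of_properSpace {E : Type*} [NormedAddCommGroup E] [ProperSpace E]
    {g : E → E} (hg : Isometry g) : Surjective g := by
  have hg' : Isometry fun x => g x - g 0 :=
    Isometry.of_dist_eq fun x y => by rw [dist_sub_right, hg.dist_eq]
  intro z
  obtain ⟨x, hx⟩ := hg'.surjective_of_isFixedPt (x₀ := 0) (sub_self _) (z - g 0)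
  exact ⟨x, sub_left_injective hx⟩

section NormedSpace

variable {E : Type*} [NormedAddCommGroup E] [NormedSpace ℝ E] {f : E → E} {K : ℝ}

theorem RoughIsometryWith.rescale (hf : RoughIsometryWith K f) {s : ℝ} (hs : 0 < s) (c p : E) :
    RoughIsometryWith (s⁻¹ * K) fun x => s⁻¹ • (f (c + s • x) - p) := by
  intro x y
  have hdist : dist (c + s • x) (c + s • y) = s * dist x y := by
    rw [dist_add_left, dist_smul₀, Real.norm_of_nonneg hs.le]
  have := hf (c + s • x) (c + s • y)
  rw [hdist] at this
  calc |dist (s⁻¹ • (f (c + s • x) - p)) (s⁻¹ • (f (c + s • y) - p)) - dist x y|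
      = s⁻¹ * |dist (f (c + s • x)) (f (c + s • y)) - s * dist x y| := by
        rw [dist_smul₀, dist_sub_right, Real.norm_of_nonneg (inv_nonneg.2 hs.le),
          ← abs_of_pos (inv_pos.2 hs), ← abs_mul, abs_of_pos (inv_pos.2 hs), mul_sub,
          inv_mul_cancel_left₀ hs.ne']
    _ ≤ s⁻¹ * K := mul_le_mul_of_nonneg_left this (inv_nonneg.2 hs.le)

theorem RoughIsometryWith.exists_forall_exists_dist_lt [ProperSpace E]
    (hf : RoughIsometryWith K f) : ∃ R, ∀ p, ∃ x, dist p (f x) < R := by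
  by_contra! hfar
  choose p hp using fun k : ℕ => hfar (k + 1)
  set S : ℕ → ℝ := fun k => infDist (p k) (range f)
  have hS : ∀ k : ℕ, (k : ℝ) + 1 ≤ S k := fun k =>
    (le_infDist (range_nonempty f)).2 (forall_mem_range.2 (hp k))
  have hSpos : ∀ k, 0 < S k := fun k => by linarith [hS k, (k.cast_nonneg : (0 : ℝ) ≤ k)]
  have hnear : ∀ k, ∃ x, dist (p k) (f x) < S k + 1 := fun k => by
    simpa using (infDist_lt_iff (range_nonempty f)).1 (lt_add_one (S k))
  choose c hc using hnear
  set F : ℕ → E → E := fun k x => (S k)⁻¹ • (f (c k + S k • x) - p k)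
  have hnorm : ∀ k x, ‖F k x‖ = (S k)⁻¹ * dist (p k) (f (c k + S k • x)) := fun k x => by
    rw [norm_smul, Real.norm_of_nonneg (inv_nonneg.2 (hSpos k).le), dist_eq_norm']
  have hδ : Tendsto (fun k => (S k)⁻¹ * K) atTop (𝓝 0) := by
    have hSlim : Tendsto S atTop atTop :=
      tendsto_atTop_mono hS (tendsto_atTop_add_const_right _ 1 tendsto_natCast_atTop_atTop)
    simpa using hSlim.inv_tendsto_atTop.mul_const K
  have hF0 : ∀ k, dist (F k 0) 0 ≤ 2 := fun k => by
    rw [dist_zero_right, hnorm, smul_zero, add_zero, inv_mul_le_iff₀ (hSpos k)]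
    linarith [hc k, hS k, (k.cast_nonneg : (0 : ℝ) ≤ k)]
  have hFfar : ∀ k x, 1 ≤ ‖F k x‖ := fun k x => by
    rw [hnorm, le_inv_mul_iff₀ (hSpos k), mul_one]
    exact infDist_le_dist_of_mem (mem_range_self _)
  obtain ⟨U, G, hG, hlim⟩ := exists_isometry_tendsto_of_roughIsometryWith
    (fun k => hf.rescale (hSpos k) (c k) (p k)) hδ 0 0 hF0
  obtain ⟨x, hx⟩ := hG.surjective_of_properSpace 0
  have : 1 ≤ ‖G x‖ := ge_of_tendsto (hlim x).norm (Eventually.of_forall (hFfar · x))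
  norm_num [hx] at this

end NormedSpace

theorem IsMetric.nonneg {α : Type*} {d : α → α → ℝ} (hd : IsMetric d) (p q : α) : 0 ≤ d p q := by
  have := hd.2.2 p q p
  rw [(hd.1 p p).2 rfl, hd.2.1 q p] at this
  linarith

theorem IsMetric.abs_sub_le_of_forall_le {α β : Type*} {d : α ⊕ β → α ⊕ β → ℝ}
    (hd : IsMetric d) {f : α → β} {C : ℝ} (hf : ∀ x, d (.inl x) (.inr (f x)) ≤ C) (a b : α) :
    |d (.inr (f a)) (.inr (f b)) - d (.inl a) (.inl b)| ≤ 2 * C := by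
  obtain ⟨-, hsymm, htri⟩ := hd
  have := hsymm (.inr (f a)) (.inl a)
  have := hsymm (.inr (f b)) (.inl b)
  rw [abs_le]
  constructor
  · linarith [htri (.inl a) (.inr (f a)) (.inl b), htri (.inr (f a)) (.inr (f b)) (.inl b),
      hf a, hf b]
  · linarith [htri (.inr (f a)) (.inl a) (.inr (f b)), htri (.inl a) (.inl b) (.inr (f b)),
      hf a, hf b]

theorem IsNorm.nonneg {n : ℕ} {ν : (Fin n → ℝ) → ℝ} (hν : IsNorm ν) (x : Fin n → ℝ) :
    0 ≤ ν x := by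
  have h := hν.2.2 x ((-1 : ℝ) • x)
  rw [hν.2.1, neg_one_smul, add_neg_cancel, (hν.1 0).2 rfl, abs_neg, abs_one] at h
  linarith

def NormedBy {n : ℕ} (_ν : (Fin n → ℝ) → ℝ) : Type := Fin n → ℝ

namespace NormedBy

variable {n : ℕ} {ν : (Fin n → ℝ) → ℝ}

variable (ν) in
def equiv : (Fin n → ℝ) ≃ NormedBy ν := Equiv.refl _

instance : AddCommGroup (NormedBy ν) := inferInstanceAs (AddCommGroup (Fin n → ℝ))

instance : Module ℝ (NormedBy ν) := inferInstanceAs (Module ℝ (Fin n → ℝ))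

instance : FiniteDimensional ℝ (NormedBy ν) := inferInstanceAs (FiniteDimensional ℝ (Fin n → ℝ))

instance : Norm (NormedBy ν) := ⟨ν⟩

theorem normedSpaceCore (hν : IsNorm ν) : NormedSpace.Core ℝ (NormedBy ν) where
  norm_nonneg := hν.nonneg
  norm_smul c x := hν.2.1 c x
  norm_triangle := hν.2.2
  norm_eq_zero_iff := hν.1

variable [Fact (IsNorm ν)]

noncomputable instance : NormedAddCommGroup (NormedBy ν) := .ofCore (normedSpaceCore Fact.out)

noncomputable instance : NormedSpace ℝ (NormedBy ν) := .ofCore (normedSpaceCore Fact.out)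

theorem dist_equiv (x y : Fin n → ℝ) : dist (equiv ν x) (equiv ν y) = ν (x - y) :=
  dist_eq_norm _ _

end NormedBy

theorem stmt11_general {n : ℕ} (ν : (Fin n → ℝ) → ℝ) (hν : IsNorm ν)
    (d : (Fin n → ℝ) ⊕ (Fin n → ℝ) → (Fin n → ℝ) ⊕ (Fin n → ℝ) → ℝ)
    (hmet : IsMetric d)
    (h1 : ∀ x y : Fin n → ℝ, d (Sum.inl x) (Sum.inl y) = ν (x - y))
    (h2 : ∀ x y : Fin n → ℝ, d (Sum.inr x) (Sum.inr y) = ν (x - y))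
    (C : ℝ)
    (hCbound : ∀ x : Fin n → ℝ, (⨅ y : Fin n → ℝ, d (Sum.inl x) (Sum.inr y)) < C) :
    ∃ D : ℝ, 0 < D ∧
      ∀ x : Fin n → ℝ, (⨅ y : Fin n → ℝ, d (Sum.inr x) (Sum.inl y)) < D := by
  have : Fact (IsNorm ν) := ⟨hν⟩
  choose f hf using fun x => exists_lt_of_ciInf_lt (hCbound x)
  set g := NormedBy.equiv ν ∘ f ∘ (NormedBy.equiv ν).symm
  have hrough : RoughIsometryWith (2 * C) g := fun a b => by
    obtain ⟨a, rfl⟩ := (NormedBy.equiv ν).surjective a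
    obtain ⟨b, rfl⟩ := (NormedBy.equiv ν).surjective b
    simp only [g, comp_apply, Equiv.symm_apply_apply, NormedBy.dist_equiv]
    rw [← h1 a b, ← h2 (f a) (f b)]
    exact hmet.abs_sub_le_of_forall_le (fun x => (hf x).le) a b
  obtain ⟨R, hR⟩ := hrough.exists_forall_exists_dist_lt
  have hnear : ∀ p, ∃ x, d (.inr p) (.inl x) < R + C := fun p => by
    obtain ⟨x, hx⟩ := hR (NormedBy.equiv ν p)
    set y := (NormedBy.equiv ν).symm x
    refine ⟨y, (hmet.2.2 _ (.inr (f y)) _).trans_lt ?_⟩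
    rw [h2, hmet.2.1, ← NormedBy.dist_equiv (ν := ν)]
    exact add_lt_add hx (hf y)
  refine ⟨R + C, ?_, fun p => ?_⟩
  · obtain ⟨x, hx⟩ := hnear 0
    exact (hmet.nonneg _ _).trans_lt hx
  · obtain ⟨x, hx⟩ := hnear p
    exact (ciInf_le ⟨0, forall_mem_range.2 fun y => hmet.nonneg _ _⟩ x).trans_lt hx

/-- for `X = ℝⁿ` with a norm-induced metric and `d` a metric on the
double `X ⊔ X'` extending it on both copies with mixed distances separated from zero:
if `d(x, X') < C` for all `x`, then `d(x', X) < D` for all `x`, for some `D > 0`. -/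
theorem stmt11 {n : ℕ} (hn : 1 ≤ n) (ν : (Fin n → ℝ) → ℝ) (hν : IsNorm ν)
    (d : (Fin n → ℝ) ⊕ (Fin n → ℝ) → (Fin n → ℝ) ⊕ (Fin n → ℝ) → ℝ)
    (hmet : IsMetric d)
    (h1 : ∀ x y : Fin n → ℝ, d (Sum.inl x) (Sum.inl y) = ν (x - y))
    (h2 : ∀ x y : Fin n → ℝ, d (Sum.inr x) (Sum.inr y) = ν (x - y))
    (hpos : ∃ ε : ℝ, 0 < ε ∧ ∀ x y : Fin n → ℝ, ε ≤ d (Sum.inl x) (Sum.inr y))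
    (C : ℝ) (hC : 0 < C)
    (hCbound : ∀ x : Fin n → ℝ, (⨅ y : Fin n → ℝ, d (Sum.inl x) (Sum.inr y)) < C) :
    ∃ D : ℝ, 0 < D ∧
      ∀ x : Fin n → ℝ, (⨅ y : Fin n → ℝ, d (Sum.inr x) (Sum.inl y)) < D :=
  stmt11_general ν hν d hmet h1 h2 C hCbound
end

section
/- If f : ℝⁿ → ℝⁿ (with the norm metric) satisfies |d(f(x), f(y)) − d(x,y)| < C for all x, y, then there exists a continuous map g : ℝⁿ → ℝⁿ with d(f(x), g(x)) < C for all x, and consequently |d(g(x), g(y)) − d(x,y)| < 3C for all x, y. -/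
namespace Stmt12Aux

variable {n : ℕ} {ν : (Fin n → ℝ) → ℝ}

lemma nu_zero (hν : IsNorm ν) : ν 0 = 0 := (hν.1 0).2 rfl

lemma nu_neg (hν : IsNorm ν) (x : Fin n → ℝ) : ν (-x) = ν x := by
  have := hν.2.1 (-1) x
  simpa using this

lemma nu_nonneg (hν : IsNorm ν) (x : Fin n → ℝ) : 0 ≤ ν x := by
  have h2 := hν.2.2 x (-x)
  rw [add_neg_cancel, nu_zero hν, nu_neg hν] at h2
  linarith

lemma nu_sub_symm (hν : IsNorm ν) (x y : Fin n → ℝ) : ν (x - y) = ν (y - x) := by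
  rw [← nu_neg hν (x - y), neg_sub]

lemma nu_tri3 (hν : IsNorm ν) (x y z : Fin n → ℝ) : ν (x - z) ≤ ν (x - y) + ν (y - z) := by
  have := hν.2.2 (x - y) (y - z)
  simpa using this

lemma abs_nu_sub_nu (hν : IsNorm ν) (x y : Fin n → ℝ) : |ν x - ν y| ≤ ν (x - y) := by
  rw [abs_sub_le_iff]
  constructor
  · have := hν.2.2 (x - y) y
    simp only [sub_add_cancel] at this
    linarith
  · have := hν.2.2 (y - x) x
    simp only [sub_add_cancel] at this
    rw [nu_sub_symm hν]
    linarith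

lemma nu_sum_le (hν : IsNorm ν) {ι : Type*} (s : Finset ι) (c : ι → ℝ)
    (u : ι → (Fin n → ℝ)) :
    ν (∑ i ∈ s, c i • u i) ≤ ∑ i ∈ s, |c i| * ν (u i) := by
  classical
  induction s using Finset.induction with
  | empty => simp [nu_zero hν]
  | insert _ _ h ih =>
    rw [Finset.sum_insert h, Finset.sum_insert h]
    calc ν (c _ • u _ + _) ≤ ν (c _ • u _) + ν (∑ i ∈ _, c i • u i) := hν.2.2 _ _
    _ ≤ |c _| * ν (u _) + ∑ i ∈ _, |c i| * ν (u i) := by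
        rw [hν.2.1]; exact add_le_add le_rfl ih

lemma nu_le_const (hν : IsNorm ν) : ∃ M : ℝ, 0 ≤ M ∧ ∀ x, ν x ≤ M * ‖x‖ := by
  classical
  refine ⟨∑ i : Fin n, ν (fun j => if i = j then 1 else 0),
    Finset.sum_nonneg fun i _ => nu_nonneg hν _, fun x => ?_⟩
  have hx : x = ∑ i : Fin n, x i • fun j => if i = j then (1:ℝ) else 0 := pi_eq_sum_univ x
  calc ν x ≤ ∑ i : Fin n, |x i| * ν (fun j => if i = j then (1:ℝ) else 0) := by
        conv_lhs => rw [hx]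
        exact nu_sum_le hν _ _ _
  _ ≤ ∑ i : Fin n, ‖x‖ * ν (fun j => if i = j then (1:ℝ) else 0) := by
        refine Finset.sum_le_sum fun i _ => ?_
        exact mul_le_mul_of_nonneg_right (by
          simpa [Real.norm_eq_abs] using norm_le_pi_norm x i) (nu_nonneg hν _)
  _ = (∑ i : Fin n, ν (fun j => if i = j then (1:ℝ) else 0)) * ‖x‖ := by
        rw [Finset.sum_mul]; simp [mul_comm]

lemma nu_continuous (hν : IsNorm ν) : Continuous ν := by
  obtain ⟨M, hM0, hM⟩ := nu_le_const hν
  refine (LipschitzWith.of_dist_le_mul (K := ⟨M, hM0⟩) fun x y => ?_).continuous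
  have h1 : |ν x - ν y| ≤ ν (x - y) := abs_nu_sub_nu hν x y
  have h2 : ν (x - y) ≤ M * ‖x - y‖ := hM _
  calc dist (ν x) (ν y) = |ν x - ν y| := Real.dist_eq _ _
  _ ≤ M * ‖x - y‖ := le_trans h1 h2
  _ = M * dist x y := by rw [dist_eq_norm]

lemma nu_lower (hν : IsNorm ν) : ∃ c : ℝ, 0 < c ∧ ∀ x, c * ‖x‖ ≤ ν x := by
  rcases Nat.eq_zero_or_pos n with hn | hn
  · refine ⟨1, one_pos, fun x => ?_⟩
    subst hn
    have hx : x = 0 := Subsingleton.elim x 0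
    rw [hx, nu_zero hν]
    simp
  · haveI : Nonempty (Fin n) := ⟨⟨0, hn⟩⟩
    have hsn : (Metric.sphere (0 : Fin n → ℝ) 1).Nonempty :=
      NormedSpace.sphere_nonempty.2 zero_le_one
    obtain ⟨z, hz, hmin⟩ := (isCompact_sphere (0 : Fin n → ℝ) 1).exists_isMinOn hsn
      ((nu_continuous hν).continuousOn)
    have hz1 : ‖z‖ = 1 := by simpa using hz
    have hz0 : z ≠ 0 := by intro h; rw [h] at hz1; simp at hz1
    have hc : 0 < ν z := lt_of_le_of_ne (nu_nonneg hν z)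
      (fun h => hz0 ((hν.1 z).1 h.symm))
    refine ⟨ν z, hc, fun x => ?_⟩
    rcases eq_or_ne x 0 with rfl | hx0
    · simp [nu_zero hν]
    · have hnx : 0 < ‖x‖ := norm_pos_iff.2 hx0
      have hmem : ‖x‖⁻¹ • x ∈ Metric.sphere (0 : Fin n → ℝ) 1 := by
        simp [norm_smul, abs_of_pos (inv_pos.2 hnx), inv_mul_cancel₀ hnx.ne']
      have h1 : ν z ≤ ν (‖x‖⁻¹ • x) := hmin hmem
      rw [hν.2.1, abs_of_pos (inv_pos.2 hnx)] at h1
      have := mul_le_mul_of_nonneg_left h1 hnx.le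
      rw [← mul_assoc, mul_inv_cancel₀ hnx.ne', one_mul, mul_comm] at this
      linarith [this]


/-- Helly selection: a point within `R` of all `f x` for `x` in a small `ν`-ball. -/
lemma key (hν : IsNorm ν) (f : (Fin n → ℝ) → (Fin n → ℝ)) {C r R : ℝ} (hC : 0 < C)
    (hr : 0 < r) (hR0 : 0 ≤ R)
    (hf : ∀ x y, |ν (f x - f y) - ν (x - y)| < C)
    (hR : ((n : ℝ) / ((n : ℝ) + 1)) * (C + 2 * r) ≤ R)
    (p : Fin n → ℝ) :
    ∃ v, ∀ x, ν (x - p) < r → ν (v - f x) ≤ R := by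
  classical
  set ι := {x : Fin n → ℝ // ν (x - p) < r} with hι
  set F : ι → Set (Fin n → ℝ) := fun x => {v | ν (v - f x.1) ≤ R} with hF
  obtain ⟨c₀, hc₀, hlow⟩ := nu_lower hν
  have hconv : ∀ i, Convex ℝ (F i) := by
    intro i u hu w hw s t hs ht hst
    have hkey : s • (u - f i.1) + t • (w - f i.1) = s • u + t • w - (s + t) • f i.1 := by
      module
    have : s • u + t • w - f i.1 = s • (u - f i.1) + t • (w - f i.1) := by
      rw [hkey, hst, one_smul]
    show ν (s • u + t • w - f i.1) ≤ R
    rw [this]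
    calc ν (s • (u - f i.1) + t • (w - f i.1))
        ≤ ν (s • (u - f i.1)) + ν (t • (w - f i.1)) := hν.2.2 _ _
      _ = s * ν (u - f i.1) + t * ν (w - f i.1) := by
          rw [hν.2.1, hν.2.1, abs_of_nonneg hs, abs_of_nonneg ht]
      _ ≤ s * R + t * R := add_le_add (mul_le_mul_of_nonneg_left hu hs)
          (mul_le_mul_of_nonneg_left hw ht)
      _ = R := by rw [← add_mul, hst, one_mul]
  have hcomp : ∀ i, IsCompact (F i) := by
    intro i
    have hclosed : IsClosed (F i) :=
      isClosed_le (((nu_continuous hν).comp (continuous_id.sub continuous_const)))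
        continuous_const
    have hsub : F i ⊆ Metric.closedBall (f i.1) (R / c₀) := by
      intro v hv
      have h1 : c₀ * ‖v - f i.1‖ ≤ ν (v - f i.1) := hlow _
      have h2 : ν (v - f i.1) ≤ R := hv
      rw [Metric.mem_closedBall, dist_eq_norm]
      rw [le_div_iff₀ hc₀, mul_comm]
      linarith
    exact (isCompact_closedBall _ _).of_isClosed_subset hclosed hsub
  have hinter : ∀ I : Finset ι, I.card ≤ Module.finrank ℝ (Fin n → ℝ) + 1 →
      (⋂ i ∈ I, F i).Nonempty := by
    intro I hIcard
    rw [Module.finrank_fin_fun ℝ] at hIcard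
    rcases I.eq_empty_or_nonempty with rfl | ⟨i₀, hi₀⟩
    · simp
    have hkpos : 0 < I.card := Finset.card_pos.2 ⟨i₀, hi₀⟩
    set k : ℝ := (I.card : ℝ) with hk
    have hk1 : (1 : ℝ) ≤ k := Nat.one_le_cast.mpr hkpos
    have hk0 : k ≠ 0 := by positivity
    set v : Fin n → ℝ := k⁻¹ • ∑ i ∈ I, f i.1 with hv
    refine ⟨v, Set.mem_iInter₂.2 fun j hj => ?_⟩
    show ν (v - f j.1) ≤ R
    have hsplit : v - f j.1 = ∑ i ∈ I, k⁻¹ • (f i.1 - f j.1) := by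
      rw [← Finset.smul_sum, Finset.sum_sub_distrib, Finset.sum_const, smul_sub, hv]
      congr 1
      rw [← Nat.cast_smul_eq_nsmul ℝ, ← hk, smul_smul, inv_mul_cancel₀ hk0, one_smul]
    have hterm : ∀ i : ι, i ∈ I.erase j → ν (f i.1 - f j.1) ≤ C + 2 * r := by
      intro i _
      have h1 : ν (f i.1 - f j.1) < C + ν (i.1 - j.1) := by
        have := abs_lt.1 (hf i.1 j.1)
        linarith [this.2]
      have h2 : ν (i.1 - j.1) ≤ ν (i.1 - p) + ν (p - j.1) := nu_tri3 hν _ _ _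
      have h3 : ν (p - j.1) = ν (j.1 - p) := nu_sub_symm hν _ _
      have := i.2
      have := j.2
      linarith
    have hbound : ∑ i ∈ I, ν (f i.1 - f j.1) ≤ (k - 1) * (C + 2 * r) := by
      rw [← Finset.add_sum_erase I _ hj]
      have h0 : ν (f j.1 - f j.1) = 0 := by rw [sub_self, nu_zero hν]
      have : ∑ i ∈ I.erase j, ν (f i.1 - f j.1) ≤ (I.erase j).card * (C + 2 * r) := by
        have h5 := Finset.sum_le_card_nsmul (I.erase j) (fun i => ν (f i.1 - f j.1))
          (C + 2 * r) hterm
        rw [nsmul_eq_mul] at h5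
        exact h5
      have hcarde : ((I.erase j).card : ℝ) = k - 1 := by
        rw [Finset.card_erase_of_mem hj, Nat.cast_sub hkpos, Nat.cast_one, hk]
      rw [hcarde] at this
      rw [h0, zero_add]
      exact this
    have hkn : k ≤ (n : ℝ) + 1 := by
      rw [hk]
      exact_mod_cast hIcard
    have h4 : k⁻¹ * (k - 1) ≤ (n : ℝ) / ((n : ℝ) + 1) := by
      have h5 : k⁻¹ * (k - 1) = (k - 1) / k := by ring
      rw [h5, div_le_div_iff₀ (by linarith) (by positivity)]
      nlinarith
    have hCr : (0 : ℝ) ≤ C + 2 * r := by linarith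
    rw [hsplit]
    calc ν (∑ i ∈ I, k⁻¹ • (f i.1 - f j.1))
        ≤ ∑ i ∈ I, |k⁻¹| * ν (f i.1 - f j.1) := nu_sum_le hν _ _ _
      _ = k⁻¹ * ∑ i ∈ I, ν (f i.1 - f j.1) := by
          rw [← Finset.mul_sum, abs_of_pos (by positivity)]
      _ ≤ k⁻¹ * ((k - 1) * (C + 2 * r)) :=
          mul_le_mul_of_nonneg_left hbound (by positivity)
      _ = (k⁻¹ * (k - 1)) * (C + 2 * r) := by ring
      _ ≤ ((n : ℝ) / ((n : ℝ) + 1)) * (C + 2 * r) :=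
          mul_le_mul_of_nonneg_right h4 hCr
      _ ≤ R := hR
  obtain ⟨w, hw⟩ := Convex.helly_theorem_compact' (𝕜 := ℝ) hconv hcomp hinter
  refine ⟨w, fun x hx => ?_⟩
  exact Set.mem_iInter.1 hw ⟨x, hx⟩

end Stmt12Aux

open Stmt12Aux

/-- if `f : ℝⁿ → ℝⁿ` satisfies `|d(f x, f y) - d(x, y)| < C` for the
norm metric `d(x, y) = ν (x - y)`, then there is a continuous `g : ℝⁿ → ℝⁿ` with
`d(f x, g x) < C` for all `x`, and consequently `|d(g x, g y) - d(x, y)| < 3C`. -/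
theorem stmt12 {n : ℕ} (ν : (Fin n → ℝ) → ℝ) (hν : IsNorm ν)
    (f : (Fin n → ℝ) → (Fin n → ℝ)) (C : ℝ) (hC : 0 < C)
    (hf : ∀ x y, |ν (f x - f y) - ν (x - y)| < C) :
    ∃ g : (Fin n → ℝ) → (Fin n → ℝ), Continuous g ∧
      (∀ x, ν (f x - g x) < C) ∧
      ∀ x y, |ν (g x - g y) - ν (x - y)| < 3 * C := by
  classical
  set N : ℝ := (n : ℝ) with hN
  have hN0 : (0 : ℝ) ≤ N := Nat.cast_nonneg n
  set r : ℝ := C / (8 * (N + 1)) with hr_def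
  have hr : 0 < r := by positivity
  set R : ℝ := (N / (N + 1)) * (C + 2 * r) with hR_def
  have hR0 : 0 ≤ R := by positivity
  have hRC : R < C := by
    have hrval : r * (8 * (N + 1)) = C := div_mul_cancel₀ C (by positivity)
    rw [hR_def, div_mul_eq_mul_div, div_lt_iff₀ (by positivity)]
    nlinarith [hr.le, hN0, hC]
  -- select centers
  have hkey : ∀ p : Fin n → ℝ, ∃ v, ∀ x, ν (x - p) < r → ν (v - f x) ≤ R :=
    fun p => key hν f hC hr hR0 hf (le_of_eq hR_def.symm) p
  choose v hv using hkey
  -- partition of unity subordinate to the cover by ν-balls of radius r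
  set U : (Fin n → ℝ) → Set (Fin n → ℝ) := fun p => {x | ν (x - p) < r} with hU
  have hUo : ∀ p, IsOpen (U p) := by
    intro p
    exact isOpen_lt ((nu_continuous hν).comp (continuous_id.sub continuous_const))
      continuous_const
  have hcover : (Set.univ : Set (Fin n → ℝ)) ⊆ ⋃ p, U p := by
    intro x _
    refine Set.mem_iUnion.2 ⟨x, ?_⟩
    show ν (x - x) < r
    rw [sub_self, nu_zero hν]
    exact hr
  obtain ⟨ρ, hρ⟩ := PartitionOfUnity.exists_isSubordinate isClosed_univ U hUo hcover
  set g : (Fin n → ℝ) → (Fin n → ℝ) := fun x => ∑ᶠ p, ρ p x • v p with hgdef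
  have hgcont : Continuous g := hρ.continuous_finsum_smul hUo (fun p => continuousOn_const)
  have hclose : ∀ x, ν (f x - g x) < C := by
    intro x
    set s : Finset (Fin n → ℝ) := ρ.finsupport x with hs
    have hgx : (∑ᶠ p, ρ p x • v p) = ∑ p ∈ s, ρ p x • v p :=
      (ρ.sum_finsupport_smul_eq_finsum (fun p _ => v p)).symm
    have hsum1 : ∑ p ∈ s, ρ p x = 1 := ρ.sum_finsupport (Set.mem_univ x)
    have hdiff : f x - (∑ᶠ p, ρ p x • v p) = ∑ p ∈ s, ρ p x • (f x - v p) := by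
      rw [hgx]
      simp only [smul_sub, Finset.sum_sub_distrib, ← Finset.sum_smul, hsum1, one_smul]
    have hterm : ∀ p ∈ s, ρ p x * ν (f x - v p) ≤ ρ p x * R := by
      intro p hp
      have hne : ρ p x ≠ 0 := by
        have := (ρ.mem_finsupport x).1 hp
        simpa [Function.mem_support] using this
      have hxp : x ∈ U p := hρ p (subset_closure (by simpa [Function.mem_support] using hne))
      have hball : ν (x - p) < r := hxp
      have h1 : ν (v p - f x) ≤ R := hv p x hball
      have h2 : ν (f x - v p) = ν (v p - f x) := nu_sub_symm hν _ _
      exact mul_le_mul_of_nonneg_left (by rw [h2]; exact h1) (ρ.nonneg p x)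
    calc ν (f x - g x) = ν (∑ p ∈ s, ρ p x • (f x - v p)) := by rw [hgdef, hdiff]
      _ ≤ ∑ p ∈ s, |ρ p x| * ν (f x - v p) := nu_sum_le hν _ _ _
      _ = ∑ p ∈ s, ρ p x * ν (f x - v p) := by
          refine Finset.sum_congr rfl fun p _ => ?_
          rw [abs_of_nonneg (ρ.nonneg p x)]
      _ ≤ ∑ p ∈ s, ρ p x * R := Finset.sum_le_sum hterm
      _ = R := by rw [← Finset.sum_mul, hsum1, one_mul]
      _ < C := hRC
  refine ⟨g, hgcont, hclose, ?_⟩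
  intro x y
  have t1 := hclose x
  have t2 := hclose y
  have s1 : ν (g x - f x) = ν (f x - g x) := nu_sub_symm hν _ _
  have s2 : ν (g y - f y) = ν (f y - g y) := nu_sub_symm hν _ _
  have a1 : ν (g x - g y) ≤ ν (g x - f x) + ν (f x - f y) + ν (f y - g y) := by
    have u1 := nu_tri3 hν (g x) (f x) (g y)
    have u2 := nu_tri3 hν (f x) (f y) (g y)
    linarith
  have a2 : ν (f x - f y) ≤ ν (f x - g x) + ν (g x - g y) + ν (g y - f y) := by
    have u1 := nu_tri3 hν (f x) (g x) (f y)
    have u2 := nu_tri3 hν (g x) (g y) (f y)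
    linarith
  have hfxy := abs_lt.1 (hf x y)
  rw [abs_lt]
  constructor <;> [linarith [hfxy.1]; linarith [hfxy.2]]
end

section
/- Let b(n,m) = |2ⁿ − 2ᵐ| on ℕ, and let y_n = s(n)·4^{⌊n/2⌋} where s(n) = (−1)^{⌊(n−1)/2⌋}, and d(n,m) = |y_n − y_m|. Then (3/7)·b(n,m) ≤ d(n,m) ≤ 12·b(n,m) for all n, m ∈ ℕ; in particular the metrics b and d on ℕ are bi-Lipschitz equivalent (hence quasi-isometric). -/
/-!
Since `|y_n| = 4^⌊n/2⌋`, we have `2^(n-1) ≤ |y_n| ≤ 2^n`, which gives the upper bound with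
constant `3` and, through `|y_n| - |y_m|`, the lower bound once `n ≥ m + 3`. For `n = m + 2`
one uses `|y_{m+2}| = 4 |y_m|`, and for `n = m + 1` the signs: `y_{m+1}` is `4 y_m` for odd `m`
and `-y_m` for even `m ≥ 2`.
-/

/-- `y_n = s(n) · 4^⌊n/2⌋` with `s(n) = (-1)^⌊(n-1)/2⌋` (natural-number division). -/
noncomputable def yval (n : ℕ) : ℝ := (-1 : ℝ) ^ ((n - 1) / 2) * 4 ^ (n / 2)

lemma yval_two_mul_add_one (k : ℕ) : yval (2 * k + 1) = (-1) ^ k * 4 ^ k := by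
  rw [yval, show (2 * k + 1 - 1) / 2 = k by omega, show (2 * k + 1) / 2 = k by omega]

lemma yval_two_mul_add_two (k : ℕ) : yval (2 * k + 2) = (-1) ^ k * 4 ^ (k + 1) := by
  rw [yval, show (2 * k + 2 - 1) / 2 = k by omega, show (2 * k + 2) / 2 = k + 1 by omega]

lemma abs_yval (n : ℕ) : |yval n| = 2 ^ (2 * (n / 2)) := by
  rw [yval, abs_mul, abs_pow, abs_neg, abs_one, one_pow, one_mul, abs_of_pos (by positivity),
    pow_mul]
  norm_num

lemma abs_yval_le (n : ℕ) : |yval n| ≤ 2 ^ n := by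
  rw [abs_yval]
  exact pow_le_pow_right₀ one_le_two (by omega)

lemma two_pow_le_two_mul_abs_yval (n : ℕ) : (2 : ℝ) ^ n ≤ 2 * |yval n| := by
  rw [abs_yval, ← pow_succ']
  exact pow_le_pow_right₀ one_le_two (by omega)

lemma abs_yval_add_two (n : ℕ) : |yval (n + 2)| = 4 * |yval n| := by
  rw [abs_yval, abs_yval, show 2 * ((n + 2) / 2) = 2 * (n / 2) + 2 by omega, pow_add]
  ring

lemma two_mul_abs_yval_le_abs_yval_succ_sub {m : ℕ} (hm : 1 ≤ m) :
    2 * |yval m| ≤ |yval (m + 1) - yval m| := by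
  obtain ⟨k, rfl | rfl⟩ : ∃ k, m = 2 * k + 1 ∨ m = 2 * k + 2 := ⟨(m - 1) / 2, by omega⟩
  · have hstep : yval (2 * k + 1 + 1) - yval (2 * k + 1) = 3 * yval (2 * k + 1) := by
      rw [show 2 * k + 1 + 1 = 2 * k + 2 by ring, yval_two_mul_add_two, yval_two_mul_add_one]
      ring
    rw [hstep, abs_mul, abs_of_pos (three_pos : (0 : ℝ) < 3)]
    linarith [abs_nonneg (yval (2 * k + 1))]
  · have hstep : yval (2 * k + 2 + 1) - yval (2 * k + 2) = -2 * yval (2 * k + 2) := by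
      rw [show 2 * k + 2 + 1 = 2 * (k + 1) + 1 by ring, yval_two_mul_add_two,
        yval_two_mul_add_one]
      ring
    rw [hstep, abs_mul]
    norm_num

lemma abs_yval_sub_le {m n : ℕ} (h : m < n) : |yval n - yval m| ≤ 3 * (2 ^ n - 2 ^ m) := by
  have hpow : (2 : ℝ) * 2 ^ m ≤ 2 ^ n := by
    rw [← pow_succ']
    exact pow_le_pow_right₀ one_le_two h
  calc |yval n - yval m| ≤ |yval n| + |yval m| := abs_sub _ _
    _ ≤ 2 ^ n + 2 ^ m := add_le_add (abs_yval_le n) (abs_yval_le m)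
    _ ≤ 3 * (2 ^ n - 2 ^ m) := by linarith

lemma three_sevenths_mul_le_abs_yval_sub {m n : ℕ} (hm : 1 ≤ m) (h : m < n) :
    3 / 7 * ((2 : ℝ) ^ n - 2 ^ m) ≤ |yval n - yval m| := by
  have hm_low := two_pow_le_two_mul_abs_yval m
  have hm_pos : (0 : ℝ) < 2 ^ m := by positivity
  have hsub := abs_sub_abs_le_abs_sub (yval n) (yval m)
  obtain rfl | rfl | hn : n = m + 1 ∨ n = m + 2 ∨ m + 3 ≤ n := by omega
  · rw [pow_succ]
    linarith [two_mul_abs_yval_le_abs_yval_succ_sub hm]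
  · rw [abs_yval_add_two] at hsub
    rw [pow_add]
    linarith
  · have hpow : (2 : ℝ) ^ (m + 3) ≤ 2 ^ n := pow_le_pow_right₀ one_le_two hn
    rw [pow_add] at hpow
    linarith [two_pow_le_two_mul_abs_yval n, abs_yval_le m]

lemma abs_two_pow_sub_two_pow {m n : ℕ} (h : m ≤ n) : |(2 : ℝ) ^ n - 2 ^ m| = 2 ^ n - 2 ^ m :=
  abs_of_nonneg (sub_nonneg.2 (pow_le_pow_right₀ one_le_two h))

/-- with `b(n, m) = |2ⁿ - 2ᵐ|` and `d(n, m) = |y_n - y_m|`, one has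
`(3/7)·b(n,m) ≤ d(n,m) ≤ 12·b(n,m)`, i.e. the metrics `b` and `d` on `ℕ` are
bi-Lipschitz equivalent (hence quasi-isometric). -/
theorem stmt13 : ∀ n m : ℕ, 1 ≤ n → 1 ≤ m →
    (3 / 7 : ℝ) * |(2 : ℝ) ^ n - 2 ^ m| ≤ |yval n - yval m| ∧
    |yval n - yval m| ≤ 12 * |(2 : ℝ) ^ n - 2 ^ m| := by
  intro n m hn hm
  wlog hmn : m ≤ n generalizing n m
  · rw [abs_sub_comm (yval n), abs_sub_comm ((2 : ℝ) ^ n)]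
    exact this m n hm hn (by omega)
  obtain rfl | hlt := hmn.eq_or_lt
  · simp
  rw [abs_two_pow_sub_two_pow hmn]
  have hgap : (0 : ℝ) ≤ 2 ^ n - 2 ^ m := sub_nonneg.2 (pow_le_pow_right₀ one_le_two hmn)
  exact ⟨three_sevenths_mul_le_abs_yval_sub hm hlt, by linarith [abs_yval_sub_le hlt]⟩
end

section
/- The logarithmic spiral X = {(e^φ cos φ, e^φ sin φ) : φ ∈ ℝ} ⊂ ℝ² with the Euclidean metric is an R-space: if two sequences (x_n), (y_n) in X satisfy |d(x_n,x_m) − d(y_n,y_m)| ≤ C for all n, m, then sup_n d(x_n, y_n) < ∞. -/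
/-!
Two points of the spiral are at distance at most twice the difference of their moduli: between
the angles `s ≤ t` the rotation contributes at most `e^s (t - s) ≤ e^t - e^s`. Comparing with the
base points `x 0`, `y 0`, uniformly close distance functions force
`|‖x n‖ - ‖y n‖| ≤ ‖x 0‖ + ‖y 0‖ + C`, hence `dist (x n) (y n) ≤ 2 (‖x 0‖ + ‖y 0‖ + C)`.
-/

/-- The logarithmic spiral `r = e^φ` in the plane (identified with `ℂ`, whose metric
is the Euclidean metric of `ℝ²`). -/
def Spiral : Set ℂ := {z | ∃ φ : ℝ, z = Real.exp φ * Complex.exp (φ * Complex.I)}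

open Complex

lemma abs_dist_sub_dist_le_of_abs_dist_sub_dist_le {X : Type*} [PseudoMetricSpace X]
    {a a₀ b b₀ : X} {C : ℝ} (h : |dist a a₀ - dist b b₀| ≤ C) (p q : X) :
    |dist a p - dist b q| ≤ dist a₀ p + dist b₀ q + C := by
  have ha := dist_triangle a a₀ p
  have ha' := dist_triangle_right a a₀ p
  have hb := dist_triangle b b₀ q
  have hb' := dist_triangle_right b b₀ q
  rw [abs_le] at h ⊢
  constructor <;> linarith [h.1, h.2]

lemma Real.exp_mul_sub_le_exp_sub_exp (s t : ℝ) :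
    Real.exp s * (t - s) ≤ Real.exp t - Real.exp s := by
  have := mul_le_mul_of_nonneg_left (Real.add_one_le_exp (t - s)) (Real.exp_pos s).le
  rw [← Real.exp_add, add_sub_cancel] at this
  linarith

lemma norm_exp_mul_exp_ofReal_mul_I (φ : ℝ) :
    ‖(Real.exp φ : ℂ) * exp (φ * I)‖ = Real.exp φ := by
  rw [norm_mul, norm_exp_ofReal_mul_I, mul_one, norm_real, Real.norm_of_nonneg (Real.exp_pos φ).le]

lemma dist_exp_mul_exp_ofReal_mul_I_le {s t : ℝ} (hst : s ≤ t) :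
    dist ((Real.exp s : ℂ) * exp (s * I)) (Real.exp t * exp (t * I))
      ≤ 2 * (Real.exp t - Real.exp s) := by
  have hsplit : (Real.exp s : ℂ) * exp (s * I) - Real.exp t * exp (t * I)
      = (Real.exp s * (exp (I * ↑(s - t)) - 1) + ↑(Real.exp s - Real.exp t)) * exp (t * I) := by
    have hshift : exp (I * ↑(s - t)) * exp (t * I) = exp (s * I) := by
      rw [← exp_add]; push_cast; ring_nf
    rw [ofReal_sub (Real.exp s)]
    linear_combination (↑(Real.exp s) : ℂ) * hshift.symm
  have hrot : ‖exp (I * ↑(s - t)) - 1‖ ≤ t - s := by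
    simpa [abs_of_nonpos (sub_nonpos.mpr hst)] using
      Real.norm_exp_I_mul_ofReal_sub_one_le (x := s - t)
  have hexp : Real.exp s ≤ Real.exp t := Real.exp_le_exp.mpr hst
  calc dist _ _ ≤ Real.exp s * (t - s) + (Real.exp t - Real.exp s) := by
        rw [dist_eq_norm, hsplit, norm_mul, norm_exp_ofReal_mul_I, mul_one]
        refine (norm_add_le _ _).trans (add_le_add ?_ ?_)
        · rw [norm_mul, norm_real, Real.norm_of_nonneg (Real.exp_pos s).le]
          exact mul_le_mul_of_nonneg_left hrot (Real.exp_pos s).le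
        · rw [norm_real, Real.norm_eq_abs, abs_sub_comm, abs_of_nonneg (by linarith)]
    _ ≤ 2 * (Real.exp t - Real.exp s) := by
        linarith [Real.exp_mul_sub_le_exp_sub_exp s t]

lemma dist_le_two_mul_abs_norm_sub_norm_of_mem_spiral {z w : ℂ} (hz : z ∈ Spiral)
    (hw : w ∈ Spiral) :
    dist z w ≤ 2 * |‖z‖ - ‖w‖| := by
  obtain ⟨s, rfl⟩ := hz
  obtain ⟨t, rfl⟩ := hw
  rw [norm_exp_mul_exp_ofReal_mul_I, norm_exp_mul_exp_ofReal_mul_I]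
  rcases le_total s t with hst | hts
  · rw [abs_sub_comm, abs_of_nonneg (sub_nonneg.mpr (Real.exp_le_exp.mpr hst))]
    exact dist_exp_mul_exp_ofReal_mul_I_le hst
  · rw [dist_comm, abs_of_nonneg (sub_nonneg.mpr (Real.exp_le_exp.mpr hts))]
    exact dist_exp_mul_exp_ofReal_mul_I_le hts

theorem stmt17_general (C : ℝ) (x y : ℕ → ℂ)
    (hx : ∀ n, x n ∈ Spiral) (hy : ∀ n, y n ∈ Spiral)
    (h : ∀ n m, |dist (x n) (x m) - dist (y n) (y m)| ≤ C) :
    ∃ D : ℝ, ∀ n, dist (x n) (y n) ≤ D := by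
  refine ⟨2 * (‖x 0‖ + ‖y 0‖ + C), fun n => ?_⟩
  have hnorm : |‖x n‖ - ‖y n‖| ≤ ‖x 0‖ + ‖y 0‖ + C := by
    simpa only [dist_zero_right] using abs_dist_sub_dist_le_of_abs_dist_sub_dist_le (h n 0) 0 0
  linarith [dist_le_two_mul_abs_norm_sub_norm_of_mem_spiral (hx n) (hy n)]

/-- the logarithmic spiral is an R-space: if sequences `(x_n), (y_n)`
on the spiral satisfy `|d(x_n, x_m) - d(y_n, y_m)| ≤ C` for all `n, m`, then
`sup_n d(x_n, y_n) < ∞`. -/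
theorem stmt17 (C : ℝ) (hC : 0 < C) (x y : ℕ → ℂ)
    (hx : ∀ n, x n ∈ Spiral) (hy : ∀ n, y n ∈ Spiral)
    (h : ∀ n m, |dist (x n) (x m) - dist (y n) (y m)| ≤ C) :
    ∃ D : ℝ, ∀ n, dist (x n) (y n) ≤ D :=
  stmt17_general C x y hx hy h
end
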